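/- Let n ≥ 2 and let X ⊂ S be a 0-dimensional subscheme of length 2d(n−1) − 1. If F = L^{n−1} ⊗ P ⊗ I_Y (with P ∈ Pic⁰(S) and Y ⊂ S a 0-dimensional subscheme) destabilizes L^n ⊗ I_X, then the length of Y satisfies |Y| < d(n−2) − 1. -/

import Mathlib

open CategoryTheory CategoryTheory.Limits

/-!
Setting: `S` is an abelian surface over an algebraically closed field with an ample line
bundle `L` whose class `l = c₁(L)` generates `NS(S)`, and `l² = 2d`.  Bridgeland stability at
`s = 0`: `A₀ ⊂ D(S)` is the tilted abelian category of objects `A` with cohomology only in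
degrees `−1` and `0`, `H⁻¹(A) ∈ F₀` and `H⁰(A) ∈ T₀`.  Since derived categories of coherent
sheaves on abelian surfaces are not available in Mathlib, we abstract the relevant data: `Pic`
is the Picard group of `S` (multiplicative), `Coh` the collection of coherent sheaves of `S`,
and `A0` the abelian category `A₀`, together with Chern characters `(r, c·l, χ)` (with
`χ = ch₂`), cohomology sheaves, and the geometric predicates entering the statements.
-/

/-- The data of an abelian surface `S` (with ample generator `L` of `NS(S)`, `c₁(L)² = 2d`)
together with its tilted abelian category `A₀` at `s = 0` and the sheaf-theoretic notions
entering the statements. -/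
structure TiltData (d : ℤ) (Pic Coh A0 : Type*) [CommGroup Pic] [Category A0]
    [Abelian A0] where
  /-- the ample line bundle `L` with `c₁(L) = l`, `l² = 2d` -/
  L : Pic
  /-- `M` is an ample line bundle -/
  ample : Pic → Prop
  /-- the subset `Pic⁰(S)` of line bundles algebraically equivalent to `0` -/
  Pic0 : Set Pic
  /-- the (purely) 0-dimensional closed subschemes `X ⊂ S` -/
  ZeroDim : Type*
  /-- the length of a 0-dimensional subscheme -/
  len : ZeroDim → ℕ
  /-- the coherent sheaf underlying a line bundle -/
  sheafOf : Pic → Coh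
  /-- `E ⊗ I_X`, the twist of `E` by the ideal sheaf of `X` -/
  twI : Coh → ZeroDim → Coh
  /-- `E ⊗ P`, the twist of `E` by a line bundle `P` -/
  twP : Coh → Pic → Coh
  /-- `dim H^i(S, E)` for a coherent sheaf `E` -/
  h : ℕ → Coh → ℕ
  /-- the rank `ch₀(E)` of a coherent sheaf -/
  cohRank : Coh → ℤ
  /-- `c₁(E) = cohC E · l` in `NS(S) = ℤ·l`, for a coherent sheaf -/
  cohC : Coh → ℤ
  /-- `ch₂(E) = χ(E)` for a coherent sheaf on an abelian surface -/
  cohChi : Coh → ℤ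
  /-- the rank `ch₀(A)` of an object of `A₀` -/
  rank : A0 → ℤ
  /-- `c₁(A) = c A · l`, for an object of `A₀` -/
  c : A0 → ℤ
  /-- `ch₂(A) = χ(A)` for an object of `A₀` -/
  chi : A0 → ℤ
  /-- the cohomology sheaf `H⁻¹(A)` of an object of `A₀` -/
  Hneg1 : A0 → Coh
  /-- the cohomology sheaf `H⁰(A)` of an object of `A₀` -/
  H0 : A0 → Coh
  /-- a coherent sheaf (in `T₀`) viewed as an object of `A₀`, concentrated in degree `0` -/
  ofSheaf : Coh → A0
  /-- `E ↦ E^∨[1] = RHom(E, O_S)[1]` as an object of `A₀` -/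
  dualShift : Coh → A0
  /-- the sheaf is supported in dimension `0` -/
  supportedDim0 : Coh → Prop
  /-- the sheaf is Gieseker semistable with respect to `L` -/
  GiesekerSemistable : Coh → Prop
  /-- the sheaf is locally free -/
  locallyFree : Coh → Prop
  /-- the sheaf is torsion-free -/
  torsionFree : Coh → Prop
  rank_ofSheaf : ∀ E : Coh, rank (ofSheaf E) = cohRank E
  c_ofSheaf : ∀ E : Coh, c (ofSheaf E) = cohC E
  chi_ofSheaf : ∀ E : Coh, chi (ofSheaf E) = cohChi E
  cohRank_pow : ∀ n : ℤ, cohRank (sheafOf (L ^ n)) = 1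
  cohC_pow : ∀ n : ℤ, cohC (sheafOf (L ^ n)) = n
  cohChi_pow : ∀ n : ℤ, cohChi (sheafOf (L ^ n)) = n ^ 2 * d
  cohRank_twI : ∀ (E : Coh) (X : ZeroDim), cohRank (twI E X) = cohRank E
  cohC_twI : ∀ (E : Coh) (X : ZeroDim), cohC (twI E X) = cohC E
  cohChi_twI : ∀ (E : Coh) (X : ZeroDim), cohChi (twI E X) = cohChi E - len X
  cohRank_twP : ∀ (E : Coh) (P : Pic), P ∈ Pic0 → cohRank (twP E P) = cohRank E
  cohC_twP : ∀ (E : Coh) (P : Pic), P ∈ Pic0 → cohC (twP E P) = cohC E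
  cohChi_twP : ∀ (E : Coh) (P : Pic), P ∈ Pic0 → cohChi (twP E P) = cohChi E

variable {d : ℤ} {Pic Coh A0 : Type*} [CommGroup Pic] [Category A0] [Abelian A0]

/-- `F` is a proper nonzero subobject of `E` in the abelian category `A₀`. -/
def ProperSubobject (F E : A0) : Prop :=
  ¬ IsZero F ∧ ∃ f : F ⟶ E, Mono f ∧ ¬ IsIso f

namespace TiltData

/-- The Bridgeland slope `μ_{0,t}(A) = (χ − d·r·t²)/(2t·d·c)` of an object `A ∈ A₀` with
`ch(A) = (r, c·l, χ)`, equal to `+∞` when `c = 0`. -/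
noncomputable def slope (D : TiltData d Pic Coh A0) (t : ℝ) (A : A0) : EReal :=
  if D.c A = 0 then ⊤
  else (((D.chi A : ℝ) - (d : ℝ) * (D.rank A : ℝ) * t ^ 2) /
      (2 * t * (d : ℝ) * (D.c A : ℝ)) : ℝ)

/-- `E` is `σ_t`-semistable: `μ_{0,t}(F) ≤ μ_{0,t}(E)` for every proper nonzero subobject
`F` of `E` in `A₀`. -/
def semistable (D : TiltData d Pic Coh A0) (t : ℝ) (E : A0) : Prop :=
  ∀ F : A0, ProperSubobject F E → D.slope t F ≤ D.slope t E

/-- `E` is `σ_t`-stable: `μ_{0,t}(F) < μ_{0,t}(E)` for every proper nonzero subobject `F` of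
`E` in `A₀`. -/
def stable (D : TiltData d Pic Coh A0) (t : ℝ) (E : A0) : Prop :=
  ∀ F : A0, ProperSubobject F E → D.slope t F < D.slope t E

/-- `F` destabilizes `E`: `F` is a proper nonzero subobject of `E` in `A₀` with
`μ_{0,t}(F) > μ_{0,t}(E)` for some `t > 0`. -/
def destabilizes (D : TiltData d Pic Coh A0) (F E : A0) : Prop :=
  ProperSubobject F E ∧ ∃ t : ℝ, 0 < t ∧ D.slope t E < D.slope t F

/-- A coherent sheaf `E` satisfies `IT₀`: `H^i(S, E ⊗ P) = 0` for all `i ≠ 0` and all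
`P ∈ Pic⁰(S)`. -/
def IT0 (D : TiltData d Pic Coh A0) (E : Coh) : Prop :=
  ∀ P ∈ D.Pic0, ∀ i : ℕ, i ≠ 0 → D.h i (D.twP E P) = 0

/-- `NS(S) = ⟨c₁(L)⟩`: since `NS(S) = Pic(S)/Pic⁰(S)`, this says that every line bundle is,
modulo `Pic⁰(S)`, an integer power of `L`. -/
def NSGeneratedBy (D : TiltData d Pic Coh A0) : Prop :=
  ∀ M : Pic, ∃ k : ℤ, M / D.L ^ k ∈ D.Pic0

end TiltData

/-!
`E = L^n ⊗ I_X` and `F = L^{n-1} ⊗ P ⊗ I_Y` are rank-one sheaves with `c = n` and `c = n - 1`.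
After clearing the positive denominators `2td·c` of the slopes, the `t²`-terms contribute
`d t² (c(E) - c(F)) ≥ 0` in favour of `E`, so a destabilizing `F` forces
`χ(E)·(n - 1) < χ(F)·n`. With `|X| = 2d(n - 1) - 1` this reads `n|Y| < (n - 1)(d(n - 2) - 1)`.
-/

namespace TiltData

variable (D : TiltData d Pic Coh A0)

theorem slope_lt_slope_iff (hd : 0 < d) {t : ℝ} (ht : 0 < t) {A B : A0}
    (hA : 0 < D.c A) (hB : 0 < D.c B) :
    D.slope t A < D.slope t B ↔
      ((D.chi A : ℝ) - d * D.rank A * t ^ 2) * D.c B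
        < ((D.chi B : ℝ) - d * D.rank B * t ^ 2) * D.c A := by
  have hdenA : (0 : ℝ) < 2 * t * d * D.c A := by positivity
  have hdenB : (0 : ℝ) < 2 * t * d * D.c B := by positivity
  rw [slope, slope, if_neg hA.ne', if_neg hB.ne', EReal.coe_lt_coe_iff,
    div_lt_div_iff₀ hdenA hdenB]
  constructor <;> intro h <;> nlinarith [mul_pos (mul_pos two_pos ht) (d.cast_pos.mpr hd)]

theorem chi_mul_c_lt_of_slope_lt (hd : 0 < d) {t : ℝ} (ht : 0 < t) {A B : A0}
    (hB : 0 < D.c B) (hc : D.c B ≤ D.c A) (hr : D.rank B = D.rank A) (hr0 : 0 ≤ D.rank A)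
    (h : D.slope t A < D.slope t B) :
    D.chi A * D.c B < D.chi B * D.c A := by
  rw [D.slope_lt_slope_iff hd ht (hB.trans_le hc) hB, hr] at h
  have hwall : (0 : ℝ) ≤ d * D.rank A * t ^ 2 * (D.c A - D.c B) := by
    have : (D.c B : ℝ) ≤ D.c A := by exact_mod_cast hc
    have : (0 : ℝ) ≤ D.rank A := by exact_mod_cast hr0
    have : (0 : ℝ) ≤ d := by exact_mod_cast hd.le
    have : (0 : ℝ) ≤ D.c A - D.c B := by linarith
    positivity
  exact_mod_cast (show (D.chi A : ℝ) * D.c B < D.chi B * D.c A by nlinarith)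

theorem ch_ofSheaf_twI_pow (n : ℤ) (X : D.ZeroDim) :
    D.rank (D.ofSheaf (D.twI (D.sheafOf (D.L ^ n)) X)) = 1 ∧
      D.c (D.ofSheaf (D.twI (D.sheafOf (D.L ^ n)) X)) = n ∧
      D.chi (D.ofSheaf (D.twI (D.sheafOf (D.L ^ n)) X)) = n ^ 2 * d - D.len X := by
  simp only [rank_ofSheaf, c_ofSheaf, chi_ofSheaf, cohRank_twI, cohC_twI, cohChi_twI,
    cohRank_pow, cohC_pow, cohChi_pow, and_self]

theorem ch_ofSheaf_twI_twP_pow (n : ℤ) {P : Pic} (hP : P ∈ D.Pic0) (Y : D.ZeroDim) :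
    D.rank (D.ofSheaf (D.twI (D.twP (D.sheafOf (D.L ^ n)) P) Y)) = 1 ∧
      D.c (D.ofSheaf (D.twI (D.twP (D.sheafOf (D.L ^ n)) P) Y)) = n ∧
      D.chi (D.ofSheaf (D.twI (D.twP (D.sheafOf (D.L ^ n)) P) Y)) = n ^ 2 * d - D.len Y := by
  simp only [rank_ofSheaf, c_ofSheaf, chi_ofSheaf, cohRank_twI, cohC_twI, cohChi_twI,
    D.cohRank_twP _ _ hP, D.cohC_twP _ _ hP, D.cohChi_twP _ _ hP,
    cohRank_pow, cohC_pow, cohChi_pow, and_self]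

end TiltData

theorem destabilizer_length_bound_general (d : ℤ) (hd : 0 < d) (Pic Coh A0 : Type*) [CommGroup Pic]
    [Category A0] [Abelian A0] (D : TiltData d Pic Coh A0)
    (n : ℤ) (hn : 2 ≤ n) (X : D.ZeroDim) (hX : (D.len X : ℤ) = 2 * d * (n - 1) - 1)
    (P : Pic) (hP : P ∈ D.Pic0) (Y : D.ZeroDim)
    (hdestab : D.destabilizes (D.ofSheaf (D.twI (D.twP (D.sheafOf (D.L ^ (n - 1))) P) Y))
      (D.ofSheaf (D.twI (D.sheafOf (D.L ^ n)) X))) :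
    (D.len Y : ℤ) < d * (n - 2) - 1 := by
  obtain ⟨-, t, ht, hlt⟩ := hdestab
  obtain ⟨hrE, hcE, hχE⟩ := D.ch_ofSheaf_twI_pow n X
  obtain ⟨hrF, hcF, hχF⟩ := D.ch_ofSheaf_twI_twP_pow (n - 1) hP Y
  have hwall := D.chi_mul_c_lt_of_slope_lt hd ht (by omega) (by omega) (hrF.trans hrE.symm)
    (by omega) hlt
  rw [hcE, hcF, hχE, hχF, hX] at hwall
  have hlen : n * D.len Y < (n - 1) * (d * (n - 2) - 1) := by
    linear_combination hwall
  have hY : (0 : ℤ) ≤ D.len Y := D.len Y |>.cast_nonneg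
  nlinarith

/-- Let `n ≥ 2` and let `X ⊂ S` be a 0-dimensional subscheme of length
`2d(n−1) − 1`.  If `F = L^{n−1} ⊗ P ⊗ I_Y` (with `P ∈ Pic⁰(S)` and `Y ⊂ S` a 0-dimensional
subscheme) destabilizes `L^n ⊗ I_X`, then the length of `Y` satisfies `|Y| < d(n−2) − 1`. -/
theorem destabilizer_length_bound (d : ℤ) (hd : 0 < d) (Pic Coh A0 : Type*) [CommGroup Pic]
    [Category A0] [Abelian A0] (D : TiltData d Pic Coh A0)
    (hample : D.ample D.L) (hNS : D.NSGeneratedBy)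
    (n : ℤ) (hn : 2 ≤ n) (X : D.ZeroDim) (hX : (D.len X : ℤ) = 2 * d * (n - 1) - 1)
    (P : Pic) (hP : P ∈ D.Pic0) (Y : D.ZeroDim)
    (hdestab : D.destabilizes (D.ofSheaf (D.twI (D.twP (D.sheafOf (D.L ^ (n - 1))) P) Y))
      (D.ofSheaf (D.twI (D.sheafOf (D.L ^ n)) X))) :
    (D.len Y : ℤ) < d * (n - 2) - 1 :=
  destabilizer_length_bound_general d hd Pic Coh A0 D n hn X hX P hP Y hdestab
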